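/- Let A ∈ ℝ^{n×d}, x† ∈ ℝ^d, b := A x†, and let 𝒦 ⊆ ℝ^d be a nonempty closed convex set with x† ∈ 𝒦; let P_𝒦 denote the metric projection onto 𝒦. Let (S_1,…,S_K) be a partition of {1,…,n} into K pairwise disjoint blocks of equal size m = n/K. Suppose L_e > 0 satisfies: for all x ∈ 𝒦, (1/K)·Σ_{k=1}^K ‖(1/m)·Aᵀ(S^k)ᵀS^k A (x − x†)‖₂² ≤ (L_e/n)·‖A(x − x†)‖₂², and suppose μ_c ∈ [0, L_e] satisfies (1/n)‖Az‖₂² ≥ μ_c‖z‖₂² for every z = c(x − x†) with c ≥ 0 and x ∈ 𝒦. Fix x⁰ ∈ 𝒦 and i ≥ 0. For each index sequence κ = (k_1,…,k_i) ∈ [K]^i define x⁰_κ := x⁰ and x^j_κ := P_𝒦(x^{j−1}_κ − (1/L_e)·(1/m)·Aᵀ(S^{k_j})ᵀS^{k_j}(A x^{j−1}_κ − b)) for j = 1,…,i. Then the average over all K^i sequences satisfies K^{−i}·Σ_{κ∈[K]^i} ‖x^i_κ − x†‖₂ ≤ (1 − μ_c/L_e)^{i/2}·‖x⁰ − x†‖₂.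 -/

import Mathlib

/-!
Projection onto the convex set `𝒦` does not increase the distance to `x† ∈ 𝒦`, so it suffices to
control the unprojected step `e ↦ e - (1/L_e) gₖ`, where `e = x - x†`. Expanding the square and
averaging over the blocks, expected smoothness bounds the quadratic term `‖gₖ‖²/L_e²` by the linear
term `⟨e, gₖ⟩/L_e`, and restricted strong convexity bounds the linear term below by `μ_c ‖e‖²`; the
mean squared error thus contracts by `1 - μ_c/L_e` per step. Summing over the tree of index
sequences gives the factor `(1 - μ_c/L_e)^i`, and Cauchy–Schwarz passes from the mean squared error
to the mean error.
-/

open Finset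
open scoped InnerProductSpace Matrix
open WithLp (toLp)

section InnerProductSpace

variable {E : Type*} [NormedAddCommGroup E] [InnerProductSpace ℝ E]

theorem norm_sub_le_of_forall_norm_sub_le {K : Set E} (hK : Convex ℝ K) {v p w : E}
    (hp : p ∈ K) (hmin : ∀ w ∈ K, ‖v - p‖ ≤ ‖v - w‖) (hw : w ∈ K) :
    ‖p - w‖ ≤ ‖v - w‖ := by
  have : Nonempty K := ⟨⟨p, hp⟩⟩
  have hinf : ‖v - p‖ = ⨅ w : K, ‖v - w‖ :=
    le_antisymm (le_ciInf fun w => hmin w w.2)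
      (ciInf_le (f := fun w : K => ‖v - w‖)
        ⟨0, Set.forall_mem_range.2 fun _ => norm_nonneg _⟩ ⟨p, hp⟩)
  have hobtuse : ⟪v - p, w - p⟫_ℝ ≤ 0 :=
    (norm_eq_iInf_iff_real_inner_le_zero hK hp).1 hinf w hw
  have hpyth : ‖v - w‖ ^ 2 = ‖v - p‖ ^ 2 - 2 * ⟪v - p, w - p⟫_ℝ + ‖w - p‖ ^ 2 := by
    rw [← norm_sub_sq_real, sub_sub_sub_cancel_right]
  have hsq : ‖p - w‖ ^ 2 ≤ ‖v - w‖ ^ 2 := by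
    rw [hpyth, norm_sub_rev p w]
    linarith [sq_nonneg ‖v - p‖]
  exact (pow_le_pow_iff_left₀ (norm_nonneg _) (norm_nonneg _) two_ne_zero).1 hsq

theorem sum_norm_sub_inv_smul_sq_le {ι : Type*} [Fintype ι] (e : E) (g : ι → E) {L μ : ℝ}
    (hL : 0 < L) (hsmooth : ∑ k, ‖g k‖ ^ 2 ≤ L * ∑ k, ⟪e, g k⟫_ℝ)
    (hrsc : Fintype.card ι * μ * ‖e‖ ^ 2 ≤ ∑ k, ⟪e, g k⟫_ℝ) :
    ∑ k, ‖e - L⁻¹ • g k‖ ^ 2 ≤ Fintype.card ι * (1 - μ / L) * ‖e‖ ^ 2 := by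
  have hexpand (k : ι) :
      ‖e - L⁻¹ • g k‖ ^ 2 = ‖e‖ ^ 2 - 2 * L⁻¹ * ⟪e, g k⟫_ℝ + (L⁻¹) ^ 2 * ‖g k‖ ^ 2 := by
    rw [norm_sub_sq_real, real_inner_smul_right, norm_smul, mul_pow, Real.norm_eq_abs, sq_abs]
    ring
  simp only [hexpand, sum_add_distrib, sum_sub_distrib, sum_const, card_univ, nsmul_eq_mul,
    ← mul_sum]
  have hgrad : (L⁻¹) ^ 2 * ∑ k, ‖g k‖ ^ 2 ≤ L⁻¹ * ∑ k, ⟪e, g k⟫_ℝ := by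
    calc (L⁻¹) ^ 2 * ∑ k, ‖g k‖ ^ 2 ≤ (L⁻¹) ^ 2 * (L * ∑ k, ⟪e, g k⟫_ℝ) := by gcongr
      _ = L⁻¹ * ∑ k, ⟪e, g k⟫_ℝ := by field_simp
  have hcurv : L⁻¹ * (Fintype.card ι * μ * ‖e‖ ^ 2) ≤ L⁻¹ * ∑ k, ⟪e, g k⟫_ℝ := by gcongr
  have : Fintype.card ι * (1 - μ / L) * ‖e‖ ^ 2
      = Fintype.card ι * ‖e‖ ^ 2 - L⁻¹ * (Fintype.card ι * μ * ‖e‖ ^ 2) := by ring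
  linarith

end InnerProductSpace

section Iteration

variable {ι α : Type*}

def iterateAlong (T : ι → α → α) (x₀ : α) : {j : ℕ} → (Fin j → ι) → α
  | 0, _ => x₀
  | j + 1, κ => T (κ (Fin.last j)) (iterateAlong T x₀ (Fin.init κ))

variable (T : ι → α → α) (x₀ : α)

@[simp]
theorem iterateAlong_snoc {j : ℕ} (κ : Fin j → ι) (k : ι) :
    iterateAlong T x₀ (Fin.snoc (α := fun _ => ι) κ k) = T k (iterateAlong T x₀ κ) := by
  simp [iterateAlong]

theorem iterateAlong_mem {s : Set α} (hT : ∀ k, Set.MapsTo (T k) s s) (hx₀ : x₀ ∈ s) :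
    ∀ {j : ℕ} (κ : Fin j → ι), iterateAlong T x₀ κ ∈ s
  | 0, _ => hx₀
  | _ + 1, κ => hT _ (iterateAlong_mem hT hx₀ (Fin.init κ))

theorem eq_iterateAlong_of_succ_eq {i : ℕ} (κ : Fin i → ι) (X : ℕ → α) (h₀ : X 0 = x₀)
    (hrec : ∀ j : Fin i, X (j + 1) = T (κ j) (X j)) : X i = iterateAlong T x₀ κ := by
  suffices h : ∀ j (hj : j ≤ i), X j = iterateAlong T x₀ (fun t : Fin j => κ (Fin.castLE hj t)) by
    simpa using h i le_rfl
  intro j hj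
  induction j with
  | zero => exact h₀
  | succ j ih => rw [hrec ⟨j, hj⟩, ih (by omega)]; rfl

theorem sum_iterateAlong_le [Fintype ι] {s : Set α} (hT : ∀ k, Set.MapsTo (T k) s s)
    (hx₀ : x₀ ∈ s) (V : α → ℝ) {c : ℝ} (hc : 0 ≤ c)
    (hV : ∀ x ∈ s, ∑ k, V (T k x) ≤ c * V x) (j : ℕ) :
    ∑ κ : Fin j → ι, V (iterateAlong T x₀ κ) ≤ c ^ j * V x₀ := by
  induction j with
  | zero => simp [iterateAlong]
  | succ j ih =>
    have hsnoc (p : ι × (Fin j → ι)) : (Fin.snocEquiv fun _ => ι) p = Fin.snoc p.2 p.1 := rfl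
    rw [← (Fin.snocEquiv fun _ => ι).sum_comp, Fintype.sum_prod_type, sum_comm]
    simp only [hsnoc, iterateAlong_snoc]
    calc ∑ κ : Fin j → ι, ∑ k, V (T k (iterateAlong T x₀ κ))
        ≤ ∑ κ : Fin j → ι, c * V (iterateAlong T x₀ κ) :=
          sum_le_sum fun κ _ => hV _ (iterateAlong_mem T x₀ hT hx₀ κ)
      _ ≤ c ^ (j + 1) * V x₀ := by rw [← mul_sum, pow_succ', mul_assoc]; gcongr

end Iteration

theorem inv_card_mul_sum_sqrt_le_sqrt {ι : Type*} [Fintype ι] [Nonempty ι] {f : ι → ℝ}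
    (hf : ∀ i, 0 ≤ f i) {C : ℝ} (hC : ∑ i, f i ≤ Fintype.card ι * C) :
    1 / (Fintype.card ι : ℝ) * ∑ i, √(f i) ≤ √C := by
  have hN : (0 : ℝ) < Fintype.card ι := by exact_mod_cast Fintype.card_pos
  have hcs : ∑ i, √(f i) ≤ √(Fintype.card ι) * √(∑ i, f i) := by
    simpa using Real.sum_sqrt_mul_sqrt_le univ (fun _ => zero_le_one) hf
  calc 1 / (Fintype.card ι : ℝ) * ∑ i, √(f i)
      ≤ 1 / (Fintype.card ι : ℝ) * (√(Fintype.card ι) * √(Fintype.card ι * C)) := by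
        gcongr
        exact hcs.trans (by gcongr)
    _ = 1 / (Fintype.card ι : ℝ) * (√(Fintype.card ι) * √(Fintype.card ι)) * √C := by
      rw [Real.sqrt_mul hN.le]; ring
    _ = √C := by rw [Real.mul_self_sqrt hN.le, one_div_mul_cancel hN.ne', one_mul]

section Minibatch

variable {ρ δ : Type*} [Fintype δ]

/-- The minibatch gradient `(1/m) Aᵀ (S^k)ᵀ S^k r` of the block `B = S_k` at the residual `r`. -/
noncomputable def minibatchGrad (A : Matrix ρ δ ℝ) (B : Finset ρ) (m : ℕ) (r : ρ → ℝ) : δ → ℝ :=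
  fun l => (1 / (m : ℝ)) * ∑ t ∈ B, A t l * r t

theorem minibatchGrad_dotProduct (A : Matrix ρ δ ℝ) (B : Finset ρ) (m : ℕ) (e : δ → ℝ) :
    minibatchGrad A B m (A *ᵥ e) ⬝ᵥ e = (1 / (m : ℝ)) * ∑ t ∈ B, (A *ᵥ e) t ^ 2 := by
  calc minibatchGrad A B m (A *ᵥ e) ⬝ᵥ e
      = (1 / (m : ℝ)) * ∑ t ∈ B, (A *ᵥ e) t * ∑ l, A t l * e l := by
        simp only [dotProduct, minibatchGrad, mul_sum, sum_mul]
        rw [sum_comm]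
        exact sum_congr rfl fun _ _ => sum_congr rfl fun _ _ => by ring
    _ = (1 / (m : ℝ)) * ∑ t ∈ B, (A *ᵥ e) t ^ 2 := by simp only [sq]; rfl

end Minibatch

theorem norm_toLp_sq {ι : Type*} [Fintype ι] (v : ι → ℝ) :
    ‖toLp 2 v‖ ^ 2 = ∑ i, v i ^ 2 := by
  simp [EuclideanSpace.real_norm_sq_eq]

theorem sum_sq_sub_le_of_forall_sum_sq_sub_le {ι : Type*} [Fintype ι] {K : Set (ι → ℝ)}
    (hK : Convex ℝ K) {v p w : ι → ℝ} (hp : p ∈ K)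
    (hmin : ∀ w ∈ K, ∑ l, (v l - p l) ^ 2 ≤ ∑ l, (v l - w l) ^ 2) (hw : w ∈ K) :
    ∑ l, (p l - w l) ^ 2 ≤ ∑ l, (v l - w l) ^ 2 := by
  have hsq (u u' : ι → ℝ) : ∑ l, (u l - u' l) ^ 2 = ‖toLp 2 u - toLp 2 u'‖ ^ 2 := by
    rw [← WithLp.toLp_sub, norm_toLp_sq]; rfl
  simp only [hsq] at hmin ⊢
  gcongr
  refine norm_sub_le_of_forall_norm_sub_le
    (hK.linear_preimage (WithLp.linearEquiv 2 ℝ (ι → ℝ)).toLinearMap) hp (fun w' hw' => ?_) hw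
  simpa [pow_le_pow_iff_left₀ (norm_nonneg _) (norm_nonneg _) two_ne_zero] using hmin _ hw'

theorem sum_sq_minibatch_gradient_step_le {n d K m : ℕ} (hK : 0 < K) (hnKm : n = K * m)
    (A : Matrix (Fin n) (Fin d) ℝ) (S : Fin K → Finset (Fin n))
    (hdisj : ∀ k l : Fin K, k ≠ l → Disjoint (S k) (S l)) (hcover : univ.biUnion S = univ)
    {L μ : ℝ} (hL : 0 < L) (e : Fin d → ℝ)
    (hES : (1 / (K : ℝ)) * ∑ k, ∑ l, minibatchGrad A (S k) m (A *ᵥ e) l ^ 2 ≤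
      (L / n) * ∑ t, (A *ᵥ e) t ^ 2)
    (hRSC : μ * ∑ l, e l ^ 2 ≤ (1 / (n : ℝ)) * ∑ t, (A *ᵥ e) t ^ 2) :
    ∑ k, ∑ l, (e l - 1 / L * minibatchGrad A (S k) m (A *ᵥ e) l) ^ 2 ≤
      K * (1 - μ / L) * ∑ l, e l ^ 2 := by
  set g := fun k => minibatchGrad A (S k) m (A *ᵥ e)
  set R := ∑ t, (A *ᵥ e) t ^ 2
  have hKn : (K : ℝ) / n = 1 / m := by
    rw [hnKm, Nat.cast_mul, div_mul_cancel_left₀ (by positivity), one_div]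
  have hinner : ∑ k, ⟪toLp 2 e, toLp 2 (g k)⟫_ℝ = 1 / (m : ℝ) * R := by
    simp only [EuclideanSpace.inner_toLp_toLp, star_trivial, g, minibatchGrad_dotProduct,
      ← mul_sum, R]
    rw [← sum_biUnion fun k _ l _ hkl => hdisj k l hkl, hcover]
  have hsmooth : ∑ k, ‖toLp 2 (g k)‖ ^ 2 ≤ L * ∑ k, ⟪toLp 2 e, toLp 2 (g k)⟫_ℝ :=
    calc ∑ k, ‖toLp 2 (g k)‖ ^ 2 = K * (1 / (K : ℝ) * ∑ k, ∑ l, g k l ^ 2) := by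
          simp only [norm_toLp_sq]; field_simp
      _ ≤ K * (L / n * R) := by gcongr
      _ = L * ∑ k, ⟪toLp 2 e, toLp 2 (g k)⟫_ℝ := by rw [hinner, ← hKn]; ring
  have hrsc : Fintype.card (Fin K) * μ * ‖toLp 2 e‖ ^ 2 ≤ ∑ k, ⟪toLp 2 e, toLp 2 (g k)⟫_ℝ :=
    calc Fintype.card (Fin K) * μ * ‖toLp 2 e‖ ^ 2 = K * (μ * ∑ l, e l ^ 2) := by
          rw [Fintype.card_fin, norm_toLp_sq, mul_assoc]
      _ ≤ K * (1 / n * R) := by gcongr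
      _ = ∑ k, ⟪toLp 2 e, toLp 2 (g k)⟫_ℝ := by rw [hinner, ← hKn]; ring
  simpa [← WithLp.toLp_smul, ← WithLp.toLp_sub, norm_toLp_sq, one_div] using
    sum_norm_sub_inv_smul_sq_le (toLp 2 e) (fun k => toLp 2 (g k)) hL hsmooth hrsc

theorem minibatch_sgd_convergence_general {n d K m : ℕ} (hK : 0 < K)
    (hnKm : n = K * m)
    (A : Matrix (Fin n) (Fin d) ℝ) (xdag : Fin d → ℝ) (b : Fin n → ℝ)
    (hb : b = A.mulVec xdag)
    (𝒦 : Set (Fin d → ℝ)) (h𝒦conv : Convex ℝ 𝒦) (hxdag : xdag ∈ 𝒦)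
    (P : (Fin d → ℝ) → (Fin d → ℝ))
    (hP : ∀ v, P v ∈ 𝒦 ∧ ∀ w ∈ 𝒦, ∑ l, (v l - P v l) ^ 2 ≤ ∑ l, (v l - w l) ^ 2)
    (S : Fin K → Finset (Fin n))
    (hdisj : ∀ k l : Fin K, k ≠ l → Disjoint (S k) (S l))
    (hcover : (Finset.univ : Finset (Fin K)).biUnion S = Finset.univ)
    (Le : ℝ) (hLe : 0 < Le)
    (hES : ∀ x ∈ 𝒦,
      (1 / (K : ℝ)) * ∑ k : Fin K, ∑ l : Fin d,
          ((1 / (m : ℝ)) * ∑ i ∈ S k, A i l * A.mulVec (x - xdag) i) ^ 2 ≤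
        (Le / n) * ∑ i, (A.mulVec (x - xdag) i) ^ 2)
    (μc : ℝ) (hμLe : μc ≤ Le)
    (hRSC : ∀ x ∈ 𝒦, ∀ c : ℝ, 0 ≤ c →
      μc * ∑ l, (c • (x - xdag)) l ^ 2 ≤
        (1 / (n : ℝ)) * ∑ i, (A.mulVec (c • (x - xdag)) i) ^ 2)
    (x0 : Fin d → ℝ) (hx0 : x0 ∈ 𝒦) (i : ℕ)
    (X : (Fin i → Fin K) → ℕ → (Fin d → ℝ))
    (hX0 : ∀ κ, X κ 0 = x0)
    (hXrec : ∀ κ : Fin i → Fin K, ∀ j : Fin i,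
      X κ ((j : ℕ) + 1) = P (fun l => X κ (j : ℕ) l -
        (1 / Le) * ((1 / (m : ℝ)) * ∑ t ∈ S (κ j), A t l * (A.mulVec (X κ (j : ℕ)) t - b t)))) :
    (1 / (K : ℝ) ^ i) * ∑ κ : Fin i → Fin K, Real.sqrt (∑ l, (X κ i l - xdag l) ^ 2) ≤
      Real.sqrt ((1 - μc / Le) ^ i) * Real.sqrt (∑ l, (x0 l - xdag l) ^ 2) := by
  set q := 1 - μc / Le
  have hq : 0 ≤ q := sub_nonneg.2 ((div_le_one hLe).2 hμLe)
  set T : Fin K → (Fin d → ℝ) → Fin d → ℝ :=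
    fun k x => P fun l => x l - 1 / Le * minibatchGrad A (S k) m (A *ᵥ x - b) l
  set V : (Fin d → ℝ) → ℝ := fun x => ∑ l, (x l - xdag l) ^ 2
  have hV (x) : 0 ≤ V x := sum_nonneg fun _ _ => sq_nonneg _
  have hstep : ∀ x ∈ 𝒦, ∑ k, V (T k x) ≤ (K * q) * V x := by
    intro x hx
    have hres : A *ᵥ x - b = A *ᵥ (x - xdag) := by rw [hb, Matrix.mulVec_sub]
    calc ∑ k, V (T k x)
        ≤ ∑ k, ∑ l, ((x - xdag) l - 1 / Le * minibatchGrad A (S k) m (A *ᵥ (x - xdag)) l) ^ 2 :=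
          sum_le_sum fun k _ => (sum_sq_sub_le_of_forall_sum_sq_sub_le h𝒦conv (hP _).1 (hP _).2
            hxdag).trans_eq
            (by simp only [hres, Pi.sub_apply]; exact sum_congr rfl fun l _ => by ring)
      _ ≤ K * q * V x := sum_sq_minibatch_gradient_step_le hK hnKm A S hdisj hcover hLe _
          (hES x hx) (by simpa using hRSC x hx 1 zero_le_one)
  have hX (κ) : X κ i = iterateAlong T x0 κ :=
    eq_iterateAlong_of_succ_eq T x0 κ (X κ) (hX0 κ) (hXrec κ)
  have : Nonempty (Fin K) := ⟨⟨0, hK⟩⟩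
  have hcard : (Fintype.card (Fin i → Fin K) : ℝ) = (K : ℝ) ^ i := by simp
  have hsum : ∑ κ, V (X κ i) ≤ Fintype.card (Fin i → Fin K) * (q ^ i * V x0) := by
    rw [hcard, ← mul_assoc, ← mul_pow]
    simpa only [hX] using sum_iterateAlong_le T x0 (fun _ _ _ => (hP _).1) hx0 V (by positivity)
      hstep i
  rw [← Real.sqrt_mul (pow_nonneg hq i), ← hcard]
  exact inv_card_mul_sum_sqrt_le_sqrt (fun κ => hV (X κ i)) hsum

/-- Convergence of minibatch projected SGD (step size `1/L_e`) for
noiseless constrained least-squares under expected smoothness (at the ground truth)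
and restricted strong convexity: after `i` iterations, the average over all `K^i`
minibatch index sequences of the estimation error `‖x^i_κ − x†‖₂` is at most
`(1 − μ_c/L_e)^{i/2}·‖x⁰ − x†‖₂`. -/
theorem minibatch_sgd_convergence {n d K m : ℕ} (hn : 0 < n) (hK : 0 < K)
    (hm : 0 < m) (hnKm : n = K * m)
    (A : Matrix (Fin n) (Fin d) ℝ) (xdag : Fin d → ℝ) (b : Fin n → ℝ)
    (hb : b = A.mulVec xdag)
    (𝒦 : Set (Fin d → ℝ)) (h𝒦conv : Convex ℝ 𝒦) (h𝒦closed : IsClosed 𝒦)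
    (h𝒦ne : 𝒦.Nonempty) (hxdag : xdag ∈ 𝒦)
    (P : (Fin d → ℝ) → (Fin d → ℝ))
    (hP : ∀ v, P v ∈ 𝒦 ∧ ∀ w ∈ 𝒦, ∑ l, (v l - P v l) ^ 2 ≤ ∑ l, (v l - w l) ^ 2)
    (S : Fin K → Finset (Fin n))
    (hdisj : ∀ k l : Fin K, k ≠ l → Disjoint (S k) (S l))
    (hcover : (Finset.univ : Finset (Fin K)).biUnion S = Finset.univ)
    (hcard : ∀ k, (S k).card = m)
    (Le : ℝ) (hLe : 0 < Le)
    (hES : ∀ x ∈ 𝒦,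
      (1 / (K : ℝ)) * ∑ k : Fin K, ∑ l : Fin d,
          ((1 / (m : ℝ)) * ∑ i ∈ S k, A i l * A.mulVec (x - xdag) i) ^ 2 ≤
        (Le / n) * ∑ i, (A.mulVec (x - xdag) i) ^ 2)
    (μc : ℝ) (hμ0 : 0 ≤ μc) (hμLe : μc ≤ Le)
    (hRSC : ∀ x ∈ 𝒦, ∀ c : ℝ, 0 ≤ c →
      μc * ∑ l, (c • (x - xdag)) l ^ 2 ≤
        (1 / (n : ℝ)) * ∑ i, (A.mulVec (c • (x - xdag)) i) ^ 2)
    (x0 : Fin d → ℝ) (hx0 : x0 ∈ 𝒦) (i : ℕ)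
    (X : (Fin i → Fin K) → ℕ → (Fin d → ℝ))
    (hX0 : ∀ κ, X κ 0 = x0)
    (hXrec : ∀ κ : Fin i → Fin K, ∀ j : Fin i,
      X κ ((j : ℕ) + 1) = P (fun l => X κ (j : ℕ) l -
        (1 / Le) * ((1 / (m : ℝ)) * ∑ t ∈ S (κ j), A t l * (A.mulVec (X κ (j : ℕ)) t - b t)))) :
    (1 / (K : ℝ) ^ i) * ∑ κ : Fin i → Fin K, Real.sqrt (∑ l, (X κ i l - xdag l) ^ 2) ≤
      Real.sqrt ((1 - μc / Le) ^ i) * Real.sqrt (∑ l, (x0 l - xdag l) ^ 2) :=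
  minibatch_sgd_convergence_general hK hnKm A xdag b hb 𝒦 h𝒦conv hxdag P hP S hdisj hcover Le hLe
    hES μc hμLe hRSC x0 hx0 i X hX0 hXrec
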